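/- arXiv:1504.05087 — 5 statements merged into one kernel-verified Lean document; each statement's English description precedes it below -/
import Mathlib

section
/- For 0 < y < 1, c > 0, γ = 1/(1-y): if a > γ(1 + √(c+y-cy)) then φ(a) > b, where φ(x) = γx(x-1+c)/(x-γ) and b = ((1+√(c+y-cy))/(1-y))². -/
/-!
Write `γ = 1/(1-y)`, `s = √(c + y - cy)` and `r = γ(1 + s)`, so that `b = r²`. Because
`s² - 1 = (c - 1)(1 - y)`, the point `r` solves `r² - 2γr = γ(c - 1)`, and this makes
`φ(x) = r² + γ(x - r)² / (x - γ)` on `x > γ`: the minimum of `φ` beyond its pole is `b`,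
attained only at `x = r`.
-/

lemma sq_lt_of_sq_sub_two_mul_eq {γ c r a : ℝ} (hγ : 0 < γ) (hr : r ^ 2 - 2 * γ * r = γ * (c - 1))
    (hγr : γ ≤ r) (hra : r < a) :
    r ^ 2 < γ * a * (a - 1 + c) / (a - γ) := by
  have hpole : 0 < a - γ := by linarith
  have hdecomp : γ * a * (a - 1 + c) - r ^ 2 * (a - γ) = γ * (a - r) ^ 2 := by
    linear_combination (-a) * hr
  rw [lt_div_iff₀ hpole]
  have : 0 < γ * (a - r) ^ 2 := by
    have : 0 < a - r := by linarith
    positivity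
  linarith

lemma wachter_edge_sq_sub_two_mul_eq {y c s : ℝ} (hy1 : y < 1) (hs : s ^ 2 = c + y - c * y) :
    (1 / (1 - y) * (1 + s)) ^ 2 - 2 * (1 / (1 - y)) * (1 / (1 - y) * (1 + s))
      = 1 / (1 - y) * (c - 1) := by
  have : 1 - y ≠ 0 := by linarith
  field_simp
  linear_combination hs

theorem phi_gt_right_edge (y c a : ℝ) (hy : 0 < y) (hy1 : y < 1) (hc : 0 < c)
    (ha : a > (1/(1-y)) * (1 + Real.sqrt (c + y - c*y))) :
    (1/(1-y)) * a * (a - 1 + c) / (a - 1/(1-y))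
      > ((1 + Real.sqrt (c + y - c*y)) / (1 - y))^2 := by
  set s := Real.sqrt (c + y - c * y)
  have hs : s ^ 2 = c + y - c * y := Real.sq_sqrt (by nlinarith)
  have hγ : 0 < 1 / (1 - y) := one_div_pos.mpr (sub_pos.mpr hy1)
  have hγr : 1 / (1 - y) ≤ 1 / (1 - y) * (1 + s) :=
    le_mul_of_one_le_right hγ.le (le_add_of_nonneg_right (Real.sqrt_nonneg _))
  rw [show (1 + s) / (1 - y) = 1 / (1 - y) * (1 + s) by ring]
  exact sq_lt_of_sq_sub_two_mul_eq hγ (wachter_edge_sq_sub_two_mul_eq hy1 hs) hγr ha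
end

section
/- For 0 < y < 1, c > 0, γ = 1/(1-y): if 0 < a < γ(1 - √(c+y-cy)) (assuming c+y-cy < 1 so this interval is nonempty) then 0 < φ(a) < b₁, where φ(x) = γx(x-1+c)/(x-γ) and b₁ = ((1-√(c+y-cy))/(1-y))². -/
theorem phi_lt_left_edge (y c a : ℝ) (hy : 0 < y) (hy1 : y < 1) (hc : 0 < c)
    (hcy : c + y - c*y < 1)
    (ha0 : 0 < a) (ha : a < (1/(1-y)) * (1 - Real.sqrt (c + y - c*y))) :
    0 < (1/(1-y)) * a * (a - 1 + c) / (a - 1/(1-y))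
    ∧ (1/(1-y)) * a * (a - 1 + c) / (a - 1/(1-y))
        < ((1 - Real.sqrt (c + y - c*y)) / (1 - y))^2 := by
  have h1y : 0 < 1 - y := by linarith
  set s := Real.sqrt (c + y - c*y) with hs_def
  have hs0 : 0 < c + y - c*y := by nlinarith
  have hs2 : s^2 = c + y - c*y := Real.sq_sqrt hs0.le
  have hspos : 0 < s := Real.sqrt_pos.mpr hs0
  have hs1 : s < 1 := by nlinarith
  -- a < γ(1-s)
  have hγpos : 0 < 1/(1-y) := by positivity
  have ha' : a < (1/(1-y)) * (1 - s) := ha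
  -- γ(1-s) < γ, so a - γ < 0
  have hden : a - 1/(1-y) < 0 := by
    have : (1/(1-y)) * (1 - s) < 1/(1-y) * 1 := by
      apply mul_lt_mul_of_pos_left (by linarith) hγpos
    linarith [this]
  -- γ(1-s) ≤ 1 - c : equivalent to 1 - s < (1-c)(1-y) = 1 - s², i.e. s² < s
  have hac : a < 1 - c := by
    have key : (1/(1-y)) * (1 - s) < 1 - c := by
      rw [div_mul_eq_mul_div, one_mul, div_lt_iff₀ h1y]
      nlinarith
    linarith
  have hnum : (1/(1-y)) * a * (a - 1 + c) < 0 := by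
    have : a - 1 + c < 0 := by linarith
    have hpa : 0 < (1/(1-y)) * a := by positivity
    exact mul_neg_of_pos_of_neg hpa this
  constructor
  · exact div_pos_of_neg_of_neg hnum hden
  · rw [div_lt_iff_of_neg hden]
    have hinv : (1 - y) * (1/(1-y)) = 1 := by
      field_simp
    have hkey : 0 < (a - (1/(1-y)) * (1 - s))^2 := by
      have h : a - (1/(1-y)) * (1 - s) < 0 := by linarith
      have := sq_abs (a - (1/(1-y)) * (1 - s))
      nlinarith [sq_nonneg (a - (1/(1-y)) * (1 - s))]
    have hexp : ((1 - s) / (1 - y))^2 = (1/(1-y))^2 * (1-s)^2 := by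
      field_simp
    rw [hexp]
    have h1c : (1/(1-y)) * (1 - s^2) = 1 - c := by
      rw [hs2]; field_simp; ring
    nlinarith [mul_pos hγpos hkey, h1c]
end

section
/- The Wachter density integrates to at most 1, with equality when c ≤ 1: for 0 < y < 1 and 0 < c ≤ 1, ∫_{b₁}^{b} (1-y)√((b-x)(x-b₁)) / (2πx(c+xy)) dx = 1, where b₁ = ((1-√(c+y-cy))/(1-y))² and b = ((1+√(c+y-cy))/(1-y))². -/
/-!
Partial fractions, `1 / (x * (c + x * y)) = (1 / x - 1 / (x + c / y)) / c`, reduce the integral to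
two Stieltjes transforms of the profile `√((b - x) * (x - b₁))`, at the poles `0` and `-c / y`.
After centring, `∫ t in -r..r, √(r ^ 2 - t ^ 2) / (t + a) = π * (a - √(a ^ 2 - r ^ 2))` for
`0 < r ≤ a`, from an explicit arcsine primitive; the integrand is nonnegative, which gives
integrability even when the pole sits at an endpoint (`a = r`).
At the Wachter edges the two square roots are `√(b₁ * b) = (1 - c) / (1 - y)` (this is where
`c ≤ 1` enters) and `(c + y) / (y * (1 - y))`, and the two transforms combine to `1`.
-/

open Real Set MeasureTheory intervalIntegral

section SemicircleStieltjes

variable {r a t : ℝ}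

lemma sq_sub_sq_pos_of_mem_Ioo (ht : t ∈ Ioo (-r) r) : 0 < r ^ 2 - t ^ 2 := by
  nlinarith [ht.1, ht.2]

lemma hasDerivAt_sqrt_sq_sub_sq (ht : t ∈ Ioo (-r) r) :
    HasDerivAt (fun t => √(r ^ 2 - t ^ 2)) (-t / √(r ^ 2 - t ^ 2)) t := by
  refine (((hasDerivAt_pow 2 t).const_sub (r ^ 2)).sqrt
    (sq_sub_sq_pos_of_mem_Ioo ht).ne').congr_deriv ?_
  field_simp
  ring

lemma hasDerivAt_arcsin_div (hr : 0 < r) (ht : t ∈ Ioo (-r) r) :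
    HasDerivAt (fun t => arcsin (t / r)) (1 / √(r ^ 2 - t ^ 2)) t := by
  have h₁ : -1 < t / r := by rw [lt_div_iff₀ hr]; linarith [ht.1]
  have h₂ : t / r < 1 := by rw [div_lt_one hr]; exact ht.2
  have hsqrt : √(1 - (t / r) ^ 2) = √(r ^ 2 - t ^ 2) / r := by
    rw [show 1 - (t / r) ^ 2 = (r ^ 2 - t ^ 2) / r ^ 2 by field_simp, sqrt_div' _ (sq_nonneg r),
      sqrt_sq hr.le]
  refine ((hasDerivAt_arcsin h₁.ne' h₂.ne).comp t
    ((hasDerivAt_id t).div_const r)).congr_deriv ?_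
  rw [hsqrt]
  field_simp

lemma hasDerivAt_div_mul_add (hr : 0 < r) (hta : 0 < t + a) :
    HasDerivAt (fun t => (r ^ 2 + a * t) / (r * (t + a)))
      ((a ^ 2 - r ^ 2) / (r * (t + a) ^ 2)) t := by
  have hnum : HasDerivAt (fun t => r ^ 2 + a * t) a t := by
    simpa using ((hasDerivAt_id t).const_mul a).const_add (r ^ 2)
  have hden : HasDerivAt (fun t => r * (t + a)) r t := by
    simpa using ((hasDerivAt_id t).add_const a).const_mul r
  refine (hnum.div hden (mul_pos hr hta).ne').congr_deriv ?_
  field_simp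
  ring

lemma hasDerivAt_sqrt_mul_arcsin_div_mul_add (hr : 0 < r) (hra : r ≤ a) (ht : t ∈ Ioo (-r) r) :
    HasDerivAt (fun t => √(a ^ 2 - r ^ 2) * arcsin ((r ^ 2 + a * t) / (r * (t + a))))
      ((a ^ 2 - r ^ 2) / (√(r ^ 2 - t ^ 2) * (t + a))) t := by
  rcases hra.eq_or_lt with rfl | hra
  · simpa using hasDerivAt_const t (0 : ℝ)
  have hta : 0 < t + a := by linarith [ht.1]
  have hden : 0 < r * (t + a) := mul_pos hr hta
  have hQ : 0 < √(a ^ 2 - r ^ 2) := sqrt_pos.2 (by nlinarith)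
  have h₁ : -1 < (r ^ 2 + a * t) / (r * (t + a)) := by
    rw [lt_div_iff₀ hden]; nlinarith [ht.1, ht.2]
  have h₂ : (r ^ 2 + a * t) / (r * (t + a)) < 1 := by
    rw [div_lt_one hden]; nlinarith [ht.1, ht.2]
  have hsqrt : √(1 - ((r ^ 2 + a * t) / (r * (t + a))) ^ 2)
      = √(a ^ 2 - r ^ 2) * √(r ^ 2 - t ^ 2) / (r * (t + a)) := by
    rw [show 1 - ((r ^ 2 + a * t) / (r * (t + a))) ^ 2
        = (a ^ 2 - r ^ 2) * (r ^ 2 - t ^ 2) / (r * (t + a)) ^ 2 by field_simp; ring,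
      sqrt_div' _ (sq_nonneg _), sqrt_mul (by nlinarith), sqrt_sq hden.le]
  refine (((hasDerivAt_arcsin h₁.ne' h₂.ne).comp t
    (hasDerivAt_div_mul_add hr hta)).const_mul _).congr_deriv ?_
  rw [hsqrt]
  field_simp

lemma continuousOn_sqrt_mul_arcsin_div_mul_add (hr : 0 < r) (hra : r ≤ a) :
    ContinuousOn (fun t => √(a ^ 2 - r ^ 2) * arcsin ((r ^ 2 + a * t) / (r * (t + a))))
      (Icc (-r) r) := by
  rcases hra.eq_or_lt with rfl | hra
  · simpa using continuousOn_const
  refine continuousOn_const.mul (continuous_arcsin.comp_continuousOn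
    (ContinuousOn.div (by fun_prop) (by fun_prop) fun t ht => ?_))
  exact (mul_pos hr (by linarith [ht.1])).ne'

lemma sqrt_mul_arcsin_div_mul_add_neg (hr : 0 < r) (hra : r ≤ a) :
    √(a ^ 2 - r ^ 2) * arcsin ((r ^ 2 + a * -r) / (r * (-r + a)))
      = -(√(a ^ 2 - r ^ 2) * (π / 2)) := by
  rcases hra.eq_or_lt with rfl | hra
  · simp
  rw [show (r ^ 2 + a * -r) / (r * (-r + a)) = -1 by
    rw [div_eq_iff (mul_pos hr (by linarith)).ne']; ring]
  simp

lemma sqrt_mul_arcsin_div_mul_add_self (hr : 0 < r) (hra : r ≤ a) :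
    √(a ^ 2 - r ^ 2) * arcsin ((r ^ 2 + a * r) / (r * (r + a)))
      = √(a ^ 2 - r ^ 2) * (π / 2) := by
  rw [show (r ^ 2 + a * r) / (r * (r + a)) = 1 by
    rw [div_eq_one_iff_eq (mul_pos hr (by linarith)).ne']; ring]
  simp

variable (r a) in
noncomputable def sqrtDivAddPrimitive (t : ℝ) : ℝ :=
  √(r ^ 2 - t ^ 2) + a * arcsin (t / r)
    - √(a ^ 2 - r ^ 2) * arcsin ((r ^ 2 + a * t) / (r * (t + a)))

lemma hasDerivAt_sqrtDivAddPrimitive (hr : 0 < r) (hra : r ≤ a) (ht : t ∈ Ioo (-r) r) :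
    HasDerivAt (sqrtDivAddPrimitive r a) (√(r ^ 2 - t ^ 2) / (t + a)) t := by
  have hS : 0 < √(r ^ 2 - t ^ 2) := sqrt_pos.2 (sq_sub_sq_pos_of_mem_Ioo ht)
  have hta : 0 < t + a := by linarith [ht.1]
  refine (((hasDerivAt_sqrt_sq_sub_sq ht).add ((hasDerivAt_arcsin_div hr ht).const_mul a)).sub
    (hasDerivAt_sqrt_mul_arcsin_div_mul_add hr hra ht)).congr_deriv ?_
  field_simp
  linear_combination -sq_sqrt (sq_sub_sq_pos_of_mem_Ioo ht).le

lemma continuousOn_sqrtDivAddPrimitive (hr : 0 < r) (hra : r ≤ a) :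
    ContinuousOn (sqrtDivAddPrimitive r a) (Icc (-r) r) :=
  ContinuousOn.sub (by fun_prop) (continuousOn_sqrt_mul_arcsin_div_mul_add hr hra)

lemma sqrtDivAddPrimitive_sub_neg (hr : 0 < r) (hra : r ≤ a) :
    sqrtDivAddPrimitive r a r - sqrtDivAddPrimitive r a (-r) = π * (a - √(a ^ 2 - r ^ 2)) := by
  simp only [sqrtDivAddPrimitive, sqrt_mul_arcsin_div_mul_add_self hr hra,
    sqrt_mul_arcsin_div_mul_add_neg hr hra, neg_sq, sub_self, sqrt_zero, neg_div,
    div_self hr.ne', arcsin_neg, arcsin_one]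
  ring

lemma sqrt_sq_sub_sq_div_add_nonneg (hra : r ≤ a) (ht : t ∈ Ioo (-r) r) :
    0 ≤ √(r ^ 2 - t ^ 2) / (t + a) :=
  div_nonneg (sqrt_nonneg _) (by linarith [ht.1])

theorem intervalIntegrable_sqrt_sq_sub_sq_div_add (hr : 0 < r) (hra : r ≤ a) :
    IntervalIntegrable (fun t => √(r ^ 2 - t ^ 2) / (t + a)) volume (-r) r := by
  have hr' : -r ≤ r := by linarith
  refine intervalIntegrable_deriv_of_nonneg (g := sqrtDivAddPrimitive r a) ?_ ?_ ?_
  · simpa [uIcc_of_le hr'] using continuousOn_sqrtDivAddPrimitive hr hra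
  · simpa [hr'] using fun t ht => hasDerivAt_sqrtDivAddPrimitive hr hra ht
  · simpa [hr'] using fun t ht => sqrt_sq_sub_sq_div_add_nonneg hra ht

theorem integral_sqrt_sq_sub_sq_div_add (hr : 0 < r) (hra : r ≤ a) :
    ∫ t in (-r)..r, √(r ^ 2 - t ^ 2) / (t + a) = π * (a - √(a ^ 2 - r ^ 2)) := by
  rw [integral_eq_sub_of_hasDerivAt_of_le (by linarith) (continuousOn_sqrtDivAddPrimitive hr hra)
    (fun t ht => hasDerivAt_sqrtDivAddPrimitive hr hra ht)
    (intervalIntegrable_sqrt_sq_sub_sq_div_add hr hra), sqrtDivAddPrimitive_sub_neg hr hra]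

end SemicircleStieltjes

section ChordStieltjes

variable {α β d : ℝ}

lemma sqrt_mul_div_add_eq (α β d x : ℝ) :
    √((β - x) * (x - α)) / (x + d)
      = √(((β - α) / 2) ^ 2 - (x - (α + β) / 2) ^ 2)
        / (x - (α + β) / 2 + ((α + β) / 2 + d)) := by
  rw [show (β - x) * (x - α) = ((β - α) / 2) ^ 2 - (x - (α + β) / 2) ^ 2 by ring,
    show x + d = x - (α + β) / 2 + ((α + β) / 2 + d) by ring]

theorem intervalIntegrable_sqrt_mul_div_add (hαβ : α < β) (hd : 0 ≤ α + d) :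
    IntervalIntegrable (fun x => √((β - x) * (x - α)) / (x + d)) volume α β := by
  have h := (intervalIntegrable_sqrt_sq_sub_sq_div_add (a := (α + β) / 2 + d)
    (by linarith : 0 < (β - α) / 2) (by linarith)).comp_sub_right ((α + β) / 2)
  simp only [sqrt_mul_div_add_eq α β d]
  convert h using 1 <;> ring

theorem integral_sqrt_mul_div_add (hαβ : α < β) (hd : 0 ≤ α + d) :
    ∫ x in α..β, √((β - x) * (x - α)) / (x + d)
      = π * ((α + β) / 2 + d - √((α + d) * (β + d))) := by
  simp only [sqrt_mul_div_add_eq α β d]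
  rw [integral_comp_sub_right
      (fun t => √(((β - α) / 2) ^ 2 - t ^ 2) / (t + ((α + β) / 2 + d))),
    show α - (α + β) / 2 = -((β - α) / 2) by ring, show β - (α + β) / 2 = (β - α) / 2 by ring,
    integral_sqrt_sq_sub_sq_div_add (by linarith) (by linarith),
    show ((α + β) / 2 + d) ^ 2 - ((β - α) / 2) ^ 2 = (α + d) * (β + d) by ring]

theorem integral_sqrt_mul_div_mul_add_mul {c y : ℝ} (hαβ : α < β) (hα : 0 ≤ α) (hc : 0 < c)
    (hy : 0 < y) :
    ∫ x in α..β, √((β - x) * (x - α)) / (x * (c + x * y))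
      = π / c * (√((α + c / y) * (β + c / y)) - √(α * β) - c / y) := by
  have hd : 0 ≤ α + c / y := by positivity
  have hint₀ := intervalIntegrable_sqrt_mul_div_add hαβ (d := 0) (by simpa using hα)
  have h₀ := integral_sqrt_mul_div_add hαβ (d := 0) (by simpa using hα)
  simp only [add_zero] at hint₀ h₀
  calc _ = ∫ x in α..β,
          1 / c * (√((β - x) * (x - α)) / x - √((β - x) * (x - α)) / (x + c / y)) := by
        refine integral_congr_ae (Filter.Eventually.of_forall fun x hx => ?_)
        have hx₀ : 0 < x := hα.trans_lt ((uIoc_of_le hαβ.le) ▸ hx).1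
        field_simp
        ring
    _ = 1 / c * ((∫ x in α..β, √((β - x) * (x - α)) / x)
          - ∫ x in α..β, √((β - x) * (x - α)) / (x + c / y)) := by
        rw [intervalIntegral.integral_const_mul,
          integral_sub hint₀ (intervalIntegrable_sqrt_mul_div_add hαβ hd)]
    _ = _ := by
        rw [h₀, integral_sqrt_mul_div_add hαβ hd]
        ring

end ChordStieltjes

noncomputable def wachterLowerEdge (y c : ℝ) : ℝ := ((1 - √(c + y - c * y)) / (1 - y)) ^ 2

noncomputable def wachterUpperEdge (y c : ℝ) : ℝ := ((1 + √(c + y - c * y)) / (1 - y)) ^ 2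

section WachterEdges

variable {y c : ℝ}

lemma wachterLowerEdge_nonneg : 0 ≤ wachterLowerEdge y c := sq_nonneg _

lemma wachterLowerEdge_lt_wachterUpperEdge (hy : 0 < y) (hy1 : y < 1) (hc : 0 ≤ c) :
    wachterLowerEdge y c < wachterUpperEdge y c := by
  have hs : 0 < √(c + y - c * y) := sqrt_pos.2 (by nlinarith)
  rw [← sub_pos, show wachterUpperEdge y c - wachterLowerEdge y c
      = 4 * √(c + y - c * y) / (1 - y) ^ 2 by
    simp only [wachterLowerEdge, wachterUpperEdge]; field_simp; ring]
  positivity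

lemma wachterLowerEdge_mul_wachterUpperEdge (hy : 0 ≤ y) (hy1 : y < 1) (hc : 0 ≤ c) :
    wachterLowerEdge y c * wachterUpperEdge y c = ((1 - c) / (1 - y)) ^ 2 := by
  have hs := sq_sqrt (by nlinarith : 0 ≤ c + y - c * y)
  have hy' : 1 - y ≠ 0 := by linarith
  simp only [wachterLowerEdge, wachterUpperEdge]
  field_simp
  linear_combination (-(1 - √(c + y - c * y) ^ 2 + (1 - y) * (1 - c))) * hs

lemma wachterLowerEdge_add_wachterUpperEdge (hy : 0 ≤ y) (hy1 : y < 1) (hc : 0 ≤ c) :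
    wachterLowerEdge y c + wachterUpperEdge y c = 2 * (1 + c + y - c * y) / (1 - y) ^ 2 := by
  have hs := sq_sqrt (by nlinarith : 0 ≤ c + y - c * y)
  have hy' : 1 - y ≠ 0 := by linarith
  simp only [wachterLowerEdge, wachterUpperEdge]
  field_simp
  linear_combination 2 * hs

lemma sqrt_wachterLowerEdge_mul_wachterUpperEdge (hy : 0 ≤ y) (hy1 : y < 1) (hc : 0 ≤ c)
    (hc1 : c ≤ 1) :
    √(wachterLowerEdge y c * wachterUpperEdge y c) = (1 - c) / (1 - y) := by
  rw [wachterLowerEdge_mul_wachterUpperEdge hy hy1 hc,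
    sqrt_sq (div_nonneg (by linarith) (by linarith))]

lemma sqrt_wachterLowerEdge_add_mul_wachterUpperEdge_add (hy : 0 < y) (hy1 : y < 1) (hc : 0 ≤ c) :
    √((wachterLowerEdge y c + c / y) * (wachterUpperEdge y c + c / y))
      = (c + y) / (y * (1 - y)) := by
  have hy' : 0 < 1 - y := by linarith
  rw [show (wachterLowerEdge y c + c / y) * (wachterUpperEdge y c + c / y)
      = wachterLowerEdge y c * wachterUpperEdge y c
        + c / y * (wachterLowerEdge y c + wachterUpperEdge y c) + (c / y) ^ 2 by ring,
    wachterLowerEdge_mul_wachterUpperEdge hy.le hy1 hc,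
    wachterLowerEdge_add_wachterUpperEdge hy.le hy1 hc,
    show ((1 - c) / (1 - y)) ^ 2 + c / y * (2 * (1 + c + y - c * y) / (1 - y) ^ 2) + (c / y) ^ 2
      = ((c + y) / (y * (1 - y))) ^ 2 by field_simp; ring,
    sqrt_sq (by positivity)]

end WachterEdges

theorem wachter_density_integrates_to_one (y c : ℝ) (hy : 0 < y) (hy1 : y < 1)
    (hc : 0 < c) (hc1 : c ≤ 1) :
    ∫ x in (((1 - Real.sqrt (c + y - c*y)) / (1 - y))^2)..
          (((1 + Real.sqrt (c + y - c*y)) / (1 - y))^2),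
      (1 - y) * Real.sqrt ((((1 + Real.sqrt (c + y - c*y)) / (1 - y))^2 - x)
          * (x - ((1 - Real.sqrt (c + y - c*y)) / (1 - y))^2))
        / (2 * π * x * (c + x*y)) = 1 := by
  change ∫ x in wachterLowerEdge y c..wachterUpperEdge y c,
    (1 - y) * √((wachterUpperEdge y c - x) * (x - wachterLowerEdge y c))
      / (2 * π * x * (c + x * y)) = 1
  have hy' : 0 < 1 - y := by linarith
  calc _ = (1 - y) / (2 * π) * ∫ x in wachterLowerEdge y c..wachterUpperEdge y c,
          √((wachterUpperEdge y c - x) * (x - wachterLowerEdge y c)) / (x * (c + x * y)) := by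
        rw [← intervalIntegral.integral_const_mul]
        congr 1 with x
        rw [div_mul_div_comm, mul_assoc (2 * π) x]
    _ = (1 - y) / (2 * π) * (π / c * ((c + y) / (y * (1 - y)) - (1 - c) / (1 - y) - c / y)) := by
        rw [integral_sqrt_mul_div_mul_add_mul (wachterLowerEdge_lt_wachterUpperEdge hy hy1 hc.le)
          wachterLowerEdge_nonneg hc hy,
          sqrt_wachterLowerEdge_add_mul_wachterUpperEdge_add hy hy1 hc.le,
          sqrt_wachterLowerEdge_mul_wachterUpperEdge hy.le hy1 hc.le hc1]
    _ = 1 := by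
        field_simp
        ring
end

section
/- The condition s̄(b) < (yc-y-c)/(yb + ac) with s̄(b) = -(c(b(1-y)+1-c)+2by)/(2b(c+by)) (the square-root term vanishes at z=b) and b = ((1+√(c+y-cy))/(1-y))² is equivalent to a > (1+√(c+y-cy))/(1-y), for y ∈ (0,1), c > 0, a > 0. -/
theorem outlier_condition_equiv (y c a : ℝ) (hy : 0 < y) (hy1 : y < 1) (hc : 0 < c)
    (ha : 0 < a) :
    (-(c*((((1 + Real.sqrt (c + y - c*y)) / (1 - y))^2)*(1-y)+1-c)
          + 2*(((1 + Real.sqrt (c + y - c*y)) / (1 - y))^2)*y)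
        / (2*(((1 + Real.sqrt (c + y - c*y)) / (1 - y))^2)
            * (c + (((1 + Real.sqrt (c + y - c*y)) / (1 - y))^2)*y))
      < (y*c - y - c) / (y*(((1 + Real.sqrt (c + y - c*y)) / (1 - y))^2) + a*c))
    ↔ a > (1 + Real.sqrt (c + y - c*y)) / (1 - y) := by
  set s := Real.sqrt (c + y - c*y) with hs_def
  have hcy : 0 < c + y - c*y := by nlinarith
  have hs : 0 < s := Real.sqrt_pos.mpr hcy
  have hs2 : s^2 = c + y - c*y := Real.sq_sqrt hcy.le
  have hu : (0:ℝ) < 1 - y := by linarith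
  have hc' : c = (s^2 - y)/(1-y) := by
    rw [hs2]; field_simp; ring
  set b := ((1+s)/(1-y))^2 with hb_def
  have hb : 0 < b := by positivity
  have hB : 0 < 2*b*(c+b*y) := by positivity
  have hD : 0 < y*b + a*c := by positivity
  have key : (y*c-y-c) * (2*b*(c+b*y))
      - (-(c*(b*(1-y)+1-c)+2*b*y)) * (y*b+a*c)
      = (2*s*(1+s)*(s+y)*c/(1-y)^3) * (a*(1-y) - (1+s)) := by
    rw [hb_def]
    rw [hc']
    field_simp
    ring
  have hK : 0 < 2*s*(1+s)*(s+y)*c/(1-y)^3 := by positivity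
  rw [div_lt_div_iff₀ hB hD, gt_iff_lt, div_lt_iff₀ hu]
  constructor
  · intro h
    have h2 : 0 < (2*s*(1+s)*(s+y)*c/(1-y)^3) * (a*(1-y) - (1+s)) := by linarith
    nlinarith [mul_pos hK h2]
  · intro h
    have h2 : 0 < (2*s*(1+s)*(s+y)*c/(1-y)^3) * (a*(1-y) - (1+s)) :=
      mul_pos hK (by linarith)
    linarith
end

section
/- Δ formula (Lemma A.4 combination): let y ∈ (0,1), c > 0, and a real with a ≠ 1, a+c-1 ≠ 0, a-1-ay ≠ 0, -1+2a+c+a²(y-1) ≠ 0. Set λ = a(a-1+c)/(a-1-ay), s(λ) = (a(y-1)+1)/((a-1)(a+c-1)), m₁(λ) = (a(y-1)+1)²(-1+2a+a²(y-1)+y(c-1)) / ((a-1)²(a+c-1)²(-1+2a+c+a²(y-1))), and m₃(λ) = -(a(y-1)+1)² / ((a-1)²(-1+2a+c+a²(y-1))). Then 1 + 2yλ s(λ) + λ² y m₁(λ) + a c m₃(λ) = (1-a-c)(1+a(y-1))² / ((a-1)(-1+2a+c+a²(y-1))). -/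
/- Since a-1-ay = -(a(y-1)+1), λ = -a(a+c-1)/(a(y-1)+1), so the factors a(y-1)+1 and a+c-1
cancel in λs and λ²m₁; what remains has denominator (a-1)²(-1+2a+c+a²(y-1)). -/

theorem Delta_formula_general (y c a : ℝ)
    (ha1 : a ≠ 1) (ha3 : a + c - 1 ≠ 0) (ha2 : a - 1 - a*y ≠ 0)
    (ha4 : -1 + 2*a + c + a^2*(y-1) ≠ 0) :
    1 + 2*y*(a*(a-1+c)/(a-1-a*y)) * ((a*(y-1)+1) / ((a-1)*(a+c-1)))
      + (a*(a-1+c)/(a-1-a*y))^2 * y *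
          ((a*(y-1)+1)^2 * (-1+2*a+a^2*(y-1)+y*(c-1))
            / ((a-1)^2*(a+c-1)^2*(-1+2*a+c+a^2*(y-1))))
      + a*c * (-(a*(y-1)+1)^2 / ((a-1)^2*(-1+2*a+c+a^2*(y-1))))
    = (1-a-c)*(1+a*(y-1))^2 / ((a-1)*(-1+2*a+c+a^2*(y-1))) := by
  have hu : a - 1 - a*y = -(a*(y-1)+1) := by ring
  have hu0 : a*(y-1)+1 ≠ 0 := fun h => ha2 (by rw [hu, h, neg_zero])
  have hd : a - 1 ≠ 0 := sub_ne_zero.mpr ha1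
  have hlam_s : a*(a-1+c)/(a-1-a*y) * ((a*(y-1)+1) / ((a-1)*(a+c-1))) = -a/(a-1) := by
    rw [hu]; field_simp; ring
  have hlam_m₁ : (a*(a-1+c)/(a-1-a*y))^2 * ((a*(y-1)+1)^2 * (-1+2*a+a^2*(y-1)+y*(c-1))
      / ((a-1)^2*(a+c-1)^2*(-1+2*a+c+a^2*(y-1))))
      = a^2 * (-1+2*a+a^2*(y-1)+y*(c-1)) / ((a-1)^2*(-1+2*a+c+a^2*(y-1))) := by
    rw [hu]; field_simp; ring
  calc _ = 1 + 2*y*(-a/(a-1))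
        + y * (a^2 * (-1+2*a+a^2*(y-1)+y*(c-1)) / ((a-1)^2*(-1+2*a+c+a^2*(y-1))))
        + a*c * (-(a*(y-1)+1)^2 / ((a-1)^2*(-1+2*a+c+a^2*(y-1)))) := by
        rw [← hlam_s, ← hlam_m₁]; ring
    _ = _ := by field_simp; ring

theorem Delta_formula (y c a : ℝ) (hy : 0 < y) (hy1 : y < 1) (hc : 0 < c)
    (ha1 : a ≠ 1) (ha3 : a + c - 1 ≠ 0) (ha2 : a - 1 - a*y ≠ 0)
    (ha4 : -1 + 2*a + c + a^2*(y-1) ≠ 0) :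
    1 + 2*y*(a*(a-1+c)/(a-1-a*y)) * ((a*(y-1)+1) / ((a-1)*(a+c-1)))
      + (a*(a-1+c)/(a-1-a*y))^2 * y *
          ((a*(y-1)+1)^2 * (-1+2*a+a^2*(y-1)+y*(c-1))
            / ((a-1)^2*(a+c-1)^2*(-1+2*a+c+a^2*(y-1))))
      + a*c * (-(a*(y-1)+1)^2 / ((a-1)^2*(-1+2*a+c+a^2*(y-1))))
    = (1-a-c)*(1+a*(y-1))^2 / ((a-1)*(-1+2*a+c+a^2*(y-1))) :=
  Delta_formula_general y c a ha1 ha3 ha2 ha4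
end
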